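/- Let f be convex, differentiable with L-Lipschitz gradient, g : ℝ^n → ℝ convex, F = f + g, and let step sizes (sₖ, αₖ) satisfy 0 < s₋ ≤ sₖ ≤ 1/(2L), sₖ ≤ αₖ ≤ 1/L - sₖ, and αₖ ≥ α₋ > 0 for all k. Let (xₖ) be generated by the extragradient method: yₖ = prox_{sₖg}(xₖ - sₖ∇f(xₖ)), x_{k+1} = prox_{αₖg}(xₖ - αₖ∇f(yₖ)). Then for any minimizer x* of F and all m ≥ 1, F(x_m) - F(x*) ≤ ‖x₀ - x*‖²/(2 m α₋). -/

import Mathlib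

/-
Each prox step `p = prox_{tg}(v)` is characterised by the variational inequality
`⟪v - p, w - p⟫ ≤ t (g w - g p)`. Applying it to both half-steps of iteration `k` and using the
Lipschitz bound on `∇f` gives `αₖ L ‖x_{k+1} - y_k‖² ≤ ‖x_k - x_{k+1}‖²`; the step-size condition is
exactly what makes the quadratic form behind this estimate nonnegative. Together with the gradient
inequality of `f` at `y_k` and the descent lemma this yields, for every `z`,
`2 αₖ (F x_{k+1} - F z) ≤ ‖x_k - z‖² - ‖x_{k+1} - z‖²`.
With `z = x_k` the values `F x_k` decrease; with `z = x*` the right-hand sides telescope.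
-/

open scoped RealInnerProductSpace
open Set Filter Topology

-- The condition on the discriminant of `a A² - 2 s (1 + a L) A B + (a (1 - a L) + 2 s) B²`.
theorem extragradient_discriminant_le {L s a : ℝ} (hs : 0 ≤ s) (hsa : s ≤ a) (hL : 0 ≤ L)
    (hsum : L * (a + s) ≤ 1) :
    s ^ 2 * (1 + a * L) ^ 2 ≤ a * (a * (1 - a * L) + 2 * s) := by
  have ha : 0 ≤ a := hs.trans hsa
  have haL : 0 ≤ a * L := mul_nonneg ha hL
  have has : 0 ≤ a - s := sub_nonneg.2 hsa
  have hslack : 0 ≤ 1 - a * L - s * L := by linarith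
  rcases le_total (2 * (a * L)) 1 with hv | hv
  · have h1 : 0 ≤ s * (1 + a * L) ^ 2 * (a - s) := by positivity
    have h2 : 0 ≤ a * (a - s) * (1 - a * L) := by
      have : 0 ≤ 1 - a * L := by linarith
      positivity
    have h3 : 0 ≤ a * s * (2 - 3 * (a * L) - (a * L) ^ 2) := by
      have : 0 ≤ 2 - 3 * (a * L) - (a * L) ^ 2 := by nlinarith
      positivity
    linear_combination h1 + h2 + h3
  · have hL0 : 0 < L := hL.lt_of_ne (by rintro rfl; linarith)
    have h1 : 0 ≤ s * ((a * L) ^ 3 + (2 * (a * L) - 1) * (a * L + 1)) := by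
      have : 0 ≤ 2 * (a * L) - 1 := by linarith
      positivity
    have h2 : 0 ≤ L * (1 - a * L - s * L) * a ^ 2 := by positivity
    have h3 : 0 ≤ (1 + a * L) ^ 2 * s * (1 - a * L - s * L) := by positivity
    have hLT : 0 ≤ L * (a * (a * (1 - a * L) + 2 * s) - s ^ 2 * (1 + a * L) ^ 2) := by
      linear_combination h1 + h2 + h3
    linarith [nonneg_of_mul_nonneg_right hLT hL0]

theorem extragradient_scalar_bound {L s a A B I J : ℝ} (hs : 0 < s) (hsa : s ≤ a) (hL : 0 ≤ L)
    (hsum : L * (a + s) ≤ 1) (hI : I ≤ A * B) (hJ : J ≤ L * A * B)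
    (hIJ : (a - s) * I + s * B ^ 2 ≤ a * s * J) :
    a * L * B ^ 2 ≤ A ^ 2 - 2 * I + B ^ 2 := by
  have ha : 0 < a := hs.trans_le hsa
  have hpoly := extragradient_discriminant_le hs.le hsa hL hsum
  have haI : a * I ≤ s * (1 + a * L) * (A * B) - s * B ^ 2 := by
    nlinarith [mul_le_mul_of_nonneg_left hI hs.le,
      mul_le_mul_of_nonneg_left hJ (mul_nonneg ha.le hs.le)]
  have hquad : a * (2 * s * (1 + a * L) * (A * B))
      ≤ a * (a * A ^ 2 + (a * (1 - a * L) + 2 * s) * B ^ 2) := by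
    nlinarith [sq_nonneg (a * A - s * (1 + a * L) * B),
      mul_le_mul_of_nonneg_right hpoly (sq_nonneg B)]
  nlinarith [le_of_mul_le_mul_left hquad ha]

theorem le_div_of_antitone_of_telescoping {u d α : ℕ → ℝ} {c : ℝ} (hc : 0 < c)
    (hu : Antitone u) (hu0 : ∀ k, 0 ≤ u k) (hα : ∀ k, c ≤ α k) (hd : ∀ k, 0 ≤ d k)
    (hstep : ∀ k, 2 * α k * u (k + 1) ≤ d k - d (k + 1)) {m : ℕ} (hm : 0 < m) :
    u m ≤ d 0 / (2 * m * c) := by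
  have hterm : ∀ k ∈ Finset.range m, 2 * c * u m ≤ d k - d (k + 1) := fun k hk =>
    calc 2 * c * u m ≤ 2 * α k * u (k + 1) :=
          mul_le_mul (by linarith [hα k]) (hu (Finset.mem_range.1 hk)) (hu0 m)
            (by linarith [hα k])
      _ ≤ d k - d (k + 1) := hstep k
  have hsum := Finset.sum_le_sum hterm
  rw [Finset.sum_const, Finset.card_range, nsmul_eq_mul, Finset.sum_range_sub'] at hsum
  rw [le_div_iff₀ (by positivity)]
  linarith [hd m]

section

variable {E : Type*} [NormedAddCommGroup E] [InnerProductSpace ℝ E]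

theorem HasGradientAt.hasDerivAt_comp_add_smul [CompleteSpace E] {f : E → ℝ} {f' a d : E} {t : ℝ}
    (hf : HasGradientAt f f' (a + t • d)) :
    HasDerivAt (fun t : ℝ => f (a + t • d)) ⟪f', d⟫ t := by
  have hline : HasDerivAt (fun t : ℝ => a + t • d) d t := by
    simpa using ((hasDerivAt_id t).smul_const d).const_add a
  simpa [InnerProductSpace.toDual_apply_apply, Function.comp_def] using
    (hasGradientAt_iff_hasFDerivAt.mp hf).comp_hasDerivAt t hline

theorem ConvexOn.add_inner_le_of_hasGradientAt [CompleteSpace E] {f : E → ℝ} {f' a : E}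
    (hconv : ConvexOn ℝ univ f) (hf : HasGradientAt f f' a) (b : E) :
    f a + ⟪f', b - a⟫ ≤ f b := by
  have hline : ConvexOn ℝ univ (fun t : ℝ => f (a + t • (b - a))) := by
    simpa [Function.comp_def] using
      (hconv.translate_right a).comp_linearMap (LinearMap.toSpanSingleton ℝ E (b - a))
  have hderiv : HasDerivAt (fun t : ℝ => f (a + t • (b - a))) ⟪f', b - a⟫ 0 :=
    HasGradientAt.hasDerivAt_comp_add_smul (by simpa using hf)
  have hslope := hline.le_slope_of_hasDerivAt (mem_univ 0) (mem_univ 1) one_pos hderiv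
  simp only [slope_def_field, one_smul, add_sub_cancel, zero_smul, add_zero, sub_zero, div_one]
    at hslope
  linarith

theorem le_add_inner_add_sq_of_lipschitz_gradient [CompleteSpace E] {f : E → ℝ} {f' : E → E}
    {L : ℝ} (hf : ∀ x, HasGradientAt f (f' x) x) (hlip : ∀ x y, ‖f' x - f' y‖ ≤ L * ‖x - y‖)
    (a b : E) :
    f b ≤ f a + ⟪f' a, b - a⟫ + L / 2 * ‖b - a‖ ^ 2 := by
  set d := b - a
  set φ : ℝ → ℝ := fun t => f (a + t • d) - t * ⟪f' a, d⟫ - L / 2 * t ^ 2 * ‖d‖ ^ 2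
  have hφ : ∀ t, HasDerivAt φ (⟪f' (a + t • d), d⟫ - ⟪f' a, d⟫ - L * t * ‖d‖ ^ 2) t := by
    intro t
    refine ((((hf (a + t • d)).hasDerivAt_comp_add_smul).sub
      ((hasDerivAt_id t).mul_const ⟪f' a, d⟫)).sub
      (((hasDerivAt_pow 2 t).const_mul (L / 2)).mul_const (‖d‖ ^ 2))).congr_deriv ?_
    simp only [Nat.cast_ofNat]
    ring
  have hanti : AntitoneOn φ (Icc 0 1) := by
    refine antitoneOn_of_hasDerivWithinAt_nonpos (convex_Icc 0 1)
      (fun t _ => (hφ t).continuousAt.continuousWithinAt) (fun t _ => (hφ t).hasDerivWithinAt)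
      fun t ht => ?_
    rw [interior_Icc] at ht
    have hgrad : ‖f' (a + t • d) - f' a‖ ≤ L * (t * ‖d‖) := by
      simpa [norm_smul, abs_of_pos ht.1] using hlip (a + t • d) a
    have hcs : ⟪f' (a + t • d) - f' a, d⟫ ≤ L * t * ‖d‖ ^ 2 := by
      calc ⟪f' (a + t • d) - f' a, d⟫ ≤ ‖f' (a + t • d) - f' a‖ * ‖d‖ := real_inner_le_norm _ _
        _ ≤ L * (t * ‖d‖) * ‖d‖ := by gcongr
        _ = L * t * ‖d‖ ^ 2 := by ring
    rw [inner_sub_left] at hcs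
    linarith
  have h01 := hanti (left_mem_Icc.2 zero_le_one) (right_mem_Icc.2 zero_le_one) zero_le_one
  simp only [φ, d, one_smul, add_sub_cancel, one_mul, one_pow, mul_one, zero_smul, add_zero,
    zero_mul, sub_zero, ne_eq, OfNat.ofNat_ne_zero, not_false_eq_true, zero_pow, mul_zero] at h01
  linarith

-- `p = prox_{t g} v`
def IsProxPoint (g : E → ℝ) (t : ℝ) (v p : E) : Prop :=
  ∀ w, g p + ‖p - v‖ ^ 2 / (2 * t) ≤ g w + ‖w - v‖ ^ 2 / (2 * t)

theorem IsProxPoint.inner_sub_le {g : E → ℝ} {t : ℝ} {v p : E} (hp : IsProxPoint g t v p)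
    (hg : ConvexOn ℝ univ g) (ht : 0 < t) (w : E) :
    ⟪v - p, w - p⟫ ≤ t * (g w - g p) := by
  -- Compare `p` with `p + c • (w - p)` and let `c → 0⁺`.
  have hsmall : ∀ c ∈ Ioc (0 : ℝ) 1,
      ⟪v - p, w - p⟫ ≤ t * (g w - g p) + c / 2 * ‖w - p‖ ^ 2 := by
    rintro c ⟨hc0, hc1⟩
    have hconv : g (p + c • (w - p)) ≤ (1 - c) * g p + c * g w := by
      have h := hg.2 (mem_univ p) (mem_univ w) (sub_nonneg.2 hc1) hc0.le (by ring)
      rwa [show (1 - c) • p + c • w = p + c • (w - p) by module, smul_eq_mul, smul_eq_mul] at h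
    have hexp : ‖p + c • (w - p) - v‖ ^ 2
        = ‖p - v‖ ^ 2 - 2 * c * ⟪v - p, w - p⟫ + c ^ 2 * ‖w - p‖ ^ 2 := by
      rw [show p + c • (w - p) - v = (p - v) + c • (w - p) by module, norm_add_sq_real,
        real_inner_smul_right, norm_smul, Real.norm_of_nonneg hc0.le,
        show p - v = -(v - p) by abel, inner_neg_left, norm_neg]
      ring
    have h := hp (p + c • (w - p))
    rw [hexp] at h
    have h2t : 0 < 2 * t := by positivity
    rw [add_div, sub_div] at h
    have h' : 2 * c * ⟪v - p, w - p⟫ / (2 * t)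
        ≤ c * (g w - g p) + c ^ 2 * ‖w - p‖ ^ 2 / (2 * t) := by
      linarith
    rw [div_le_iff₀ h2t, add_mul, div_mul_cancel₀ _ h2t.ne'] at h'
    have hc : c * (2 * ⟪v - p, w - p⟫) ≤ c * (2 * t * (g w - g p) + c * ‖w - p‖ ^ 2) := by
      linarith
    linarith [le_of_mul_le_mul_left hc hc0]
  have hlim : Tendsto (fun c : ℝ => t * (g w - g p) + c / 2 * ‖w - p‖ ^ 2) (𝓝[>] 0)
      (𝓝 (t * (g w - g p))) := by
    refine tendsto_nhdsWithin_of_tendsto_nhds ?_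
    simpa using ((continuous_id.div_const 2).mul_const (‖w - p‖ ^ 2)).const_add
      (t * (g w - g p)) |>.tendsto 0
  exact ge_of_tendsto hlim (mem_of_superset (Ioc_mem_nhdsGT zero_lt_one) hsmall)

theorem IsProxPoint.extragradient_inner_le {g : E → ℝ} {s a : ℝ} {x y x' u v : E}
    (hg : ConvexOn ℝ univ g) (hs : 0 < s) (hsa : s ≤ a)
    (hy : IsProxPoint g s (x - s • u) y) (hx' : IsProxPoint g a (x - a • v) x') :
    (a - s) * ⟪x - y, x' - y⟫ + s * ‖x' - y‖ ^ 2 ≤ a * s * ⟪u - v, x' - y⟫ := by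
  have ha : 0 < a := hs.trans_le hsa
  have hy' := hy.inner_sub_le hg hs x'
  have hx'' := hx'.inner_sub_le hg ha y
  rw [show x - s • u - y = (x - y) - s • u by abel, inner_sub_left, real_inner_smul_left] at hy'
  rw [show x - a • v - x' = (x - y) - (x' - y) - a • v by abel,
    show y - x' = -(x' - y) by abel, inner_neg_right, inner_sub_left, inner_sub_left,
    real_inner_smul_left, real_inner_self_eq_norm_sq] at hx''
  rw [inner_sub_left u v]
  nlinarith [mul_le_mul_of_nonneg_left hy' ha.le, mul_le_mul_of_nonneg_left hx'' hs.le]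

theorem IsProxPoint.extragradient_mul_norm_sq_le {g : E → ℝ} {L s a : ℝ} {x y x' u v : E}
    (hg : ConvexOn ℝ univ g) (hs : 0 < s) (hsa : s ≤ a) (hL : 0 ≤ L) (hsum : L * (a + s) ≤ 1)
    (huv : ‖u - v‖ ≤ L * ‖x - y‖)
    (hy : IsProxPoint g s (x - s • u) y) (hx' : IsProxPoint g a (x - a • v) x') :
    a * L * ‖x' - y‖ ^ 2 ≤ ‖x - x'‖ ^ 2 := by
  have hJ : ⟪u - v, x' - y⟫ ≤ L * ‖x - y‖ * ‖x' - y‖ :=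
    (real_inner_le_norm _ _).trans (mul_le_mul_of_nonneg_right huv (norm_nonneg _))
  rw [show x - x' = (x - y) - (x' - y) by abel, norm_sub_sq_real (x - y) (x' - y)]
  exact extragradient_scalar_bound hs hsa hL hsum (real_inner_le_norm _ _) hJ
    (IsProxPoint.extragradient_inner_le hg hs hsa hy hx')

theorem extragradient_step_le [CompleteSpace E] {f g : E → ℝ} {f' : E → E} {L s a : ℝ} {x y x' : E}
    (hfconv : ConvexOn ℝ univ f) (hf : ∀ x, HasGradientAt f (f' x) x)
    (hlip : ∀ x y, ‖f' x - f' y‖ ≤ L * ‖x - y‖) (hg : ConvexOn ℝ univ g)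
    (hs : 0 < s) (hsa : s ≤ a) (hL : 0 ≤ L) (hsum : L * (a + s) ≤ 1)
    (hy : IsProxPoint g s (x - s • f' x) y) (hx' : IsProxPoint g a (x - a • f' y) x') (z : E) :
    2 * a * (f x' + g x' - (f z + g z)) ≤ ‖x - z‖ ^ 2 - ‖x' - z‖ ^ 2 := by
  have ha : 0 < a := hs.trans_le hsa
  have hnorm := hy.extragradient_mul_norm_sq_le hg hs hsa hL hsum (hlip x y) hx'
  have hprox := hx'.inner_sub_le hg ha z
  have hlower := hfconv.add_inner_le_of_hasGradientAt (hf y) z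
  have hupper := le_add_inner_add_sq_of_lipschitz_gradient hf hlip y x'
  have hpar : 2 * ⟪x - x', z - x'⟫ = ‖x - x'‖ ^ 2 + ‖x' - z‖ ^ 2 - ‖x - z‖ ^ 2 := by
    rw [show x - z = (x - x') - (z - x') by abel, norm_sub_sq_real (x - x') (z - x'),
      norm_sub_rev z x']
    ring
  rw [show x - a • f' y - x' = (x - x') - a • f' y by abel, inner_sub_left,
    real_inner_smul_left, show z - x' = (z - y) - (x' - y) by abel, inner_sub_right (f' y)] at hprox
  rw [show z - x' = (z - y) - (x' - y) by abel] at hpar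
  nlinarith [mul_le_mul_of_nonneg_left hlower ha.le, mul_le_mul_of_nonneg_left hupper ha.le]

end

theorem eeg_sublinear_rate_general (n : ℕ) (L : ℝ)
    (f : EuclideanSpace ℝ (Fin n) → ℝ) (f' : EuclideanSpace ℝ (Fin n) → EuclideanSpace ℝ (Fin n))
    (hfconv : ConvexOn ℝ Set.univ f)
    (hf : ∀ x, HasGradientAt f (f' x) x)
    (hlip : ∀ x y, ‖f' x - f' y‖ ≤ L * ‖x - y‖)
    (g : EuclideanSpace ℝ (Fin n) → ℝ) (hg : ConvexOn ℝ Set.univ g)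
    (s α : ℕ → ℝ) (smin αmin : ℝ)
    (hsmin : 0 < smin) (hsmin' : ∀ k, smin ≤ s k)
    (hsα : ∀ k, s k ≤ α k) (hα : ∀ k, α k ≤ 1 / L - s k)
    (hαmin : 0 < αmin) (hαmin' : ∀ k, αmin ≤ α k)
    (x y : ℕ → EuclideanSpace ℝ (Fin n))
    (hy : ∀ k w, g (y k) + ‖y k - (x k - s k • f' (x k))‖ ^ 2 / (2 * s k)
        ≤ g w + ‖w - (x k - s k • f' (x k))‖ ^ 2 / (2 * s k))
    (hx : ∀ k w, g (x (k + 1)) + ‖x (k + 1) - (x k - α k • f' (y k))‖ ^ 2 / (2 * α k)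
        ≤ g w + ‖w - (x k - α k • f' (y k))‖ ^ 2 / (2 * α k))
    (xstar : EuclideanSpace ℝ (Fin n)) (hstar : ∀ w, f xstar + g xstar ≤ f w + g w) :
    ∀ m : ℕ, 1 ≤ m →
      (f (x m) + g (x m)) - (f xstar + g xstar) ≤ ‖x 0 - xstar‖ ^ 2 / (2 * m * αmin) := by
  intro m hm
  have hs : ∀ k, 0 < s k := fun k => hsmin.trans_le (hsmin' k)
  have hL : 0 < L := one_div_pos.mp (by linarith [hs 0, hsα 0, hα 0])
  have hsum : ∀ k, L * (α k + s k) ≤ 1 := fun k => (le_div_iff₀' hL).mp (by linarith [hα k])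
  have hstep : ∀ k z, 2 * α k * (f (x (k + 1)) + g (x (k + 1)) - (f z + g z))
      ≤ ‖x k - z‖ ^ 2 - ‖x (k + 1) - z‖ ^ 2 := fun k =>
    extragradient_step_le hfconv hf hlip hg (hs k) (hsα k) hL.le (hsum k) (hy k) (hx k)
  have hdescent : Antitone fun k => f (x k) + g (x k) := antitone_nat_of_succ_le fun k => by
    have h := hstep k (x k)
    rw [sub_self, norm_zero] at h
    nlinarith [hs k, hsα k, sq_nonneg ‖x (k + 1) - x k‖]
  exact le_div_of_antitone_of_telescoping hαmin (hdescent.add_const _)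
    (fun k => sub_nonneg.2 (hstar _)) hαmin' (fun k => sq_nonneg _) (fun k => hstep k xstar) hm

theorem eeg_sublinear_rate (n : ℕ) (L : ℝ) (hL : 0 < L)
    (f : EuclideanSpace ℝ (Fin n) → ℝ) (f' : EuclideanSpace ℝ (Fin n) → EuclideanSpace ℝ (Fin n))
    (hfconv : ConvexOn ℝ Set.univ f)
    (hf : ∀ x, HasGradientAt f (f' x) x)
    (hlip : ∀ x y, ‖f' x - f' y‖ ≤ L * ‖x - y‖)
    (g : EuclideanSpace ℝ (Fin n) → ℝ) (hg : ConvexOn ℝ Set.univ g)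
    (s α : ℕ → ℝ) (smin αmin : ℝ)
    (hsmin : 0 < smin) (hsmin' : ∀ k, smin ≤ s k) (hs : ∀ k, s k ≤ 1 / (2 * L))
    (hsα : ∀ k, s k ≤ α k) (hα : ∀ k, α k ≤ 1 / L - s k)
    (hαmin : 0 < αmin) (hαmin' : ∀ k, αmin ≤ α k)
    (x y : ℕ → EuclideanSpace ℝ (Fin n))
    (hy : ∀ k w, g (y k) + ‖y k - (x k - s k • f' (x k))‖ ^ 2 / (2 * s k)
        ≤ g w + ‖w - (x k - s k • f' (x k))‖ ^ 2 / (2 * s k))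
    (hx : ∀ k w, g (x (k + 1)) + ‖x (k + 1) - (x k - α k • f' (y k))‖ ^ 2 / (2 * α k)
        ≤ g w + ‖w - (x k - α k • f' (y k))‖ ^ 2 / (2 * α k))
    (xstar : EuclideanSpace ℝ (Fin n)) (hstar : ∀ w, f xstar + g xstar ≤ f w + g w) :
    ∀ m : ℕ, 1 ≤ m →
      (f (x m) + g (x m)) - (f xstar + g xstar) ≤ ‖x 0 - xstar‖ ^ 2 / (2 * m * αmin) :=
  eeg_sublinear_rate_general n L f f' hfconv hf hlip g hg s α smin αmin hsmin hsmin' hsα hα hαmin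
    hαmin' x y hy hx xstar hstar
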